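/- Let G be a finite group and χ₁, …, χ_n irreducible characters (n ≥ 2) with χ₁(1) = max_i χ_i(1). If ⟨χ₁⋯χ_n, χ₁⋯χ_n⟩ = χ₂(1)²⋯χ_n(1)², then for every g ∈ G, either χ₁(g) = 0 or |χ₂(g)⋯χ_n(g)| = χ₂(1)⋯χ_n(1). -/

import Mathlib

open scoped BigOperators

/-- `f : G → ℂ` is the character of some finite-dimensional complex representation of `G`. -/
def IsChar (G : Type) [Group G] (f : G → ℂ) : Prop :=
  ∃ V : FDRep ℂ G, V.character = f

/-- `f : G → ℂ` is the character of an irreducible finite-dimensional complex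
representation of `G`. -/
def IsIrrChar (G : Type) [Group G] (f : G → ℂ) : Prop :=
  ∃ V : FDRep ℂ G, CategoryTheory.Simple V ∧ V.character = f

/-- The standard inner product of class functions on a finite group. -/
noncomputable def cInner (G : Type) [Group G] [Fintype G] (f g : G → ℂ) : ℂ :=
  (Fintype.card G : ℂ)⁻¹ * ∑ x : G, f x * (starRingEnd ℂ) (g x)

/-- `|χ|`: the sum of the squares of the degrees of the distinct irreducible
constituents of `χ` (an irreducible character `f` is a constituent of `χ` iff
`⟨χ, f⟩ ≠ 0`). -/
noncomputable def charNorm (G : Type) [Group G] [Fintype G] (χ : G → ℂ) : ℝ :=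
  ∑' f : {f : G → ℂ // IsIrrChar G f ∧ cInner G χ f ≠ 0}, Complex.normSq (f.1 1)

/-!
Put `ψ = ∏_{i ≠ i₀} χ i` and `M = ∏_{i ≠ i₀} χ i (1) ^ 2`. Pointwise `|ψ g| ^ 2 ≤ M`, and
`∑_g |χ i₀ g| ^ 2 = |G|`, so the hypothesis says that the average of `|ψ| ^ 2` with the weights
`|χ i₀| ^ 2` reaches its upper bound `M`; hence `|ψ g| ^ 2 = M` wherever `χ i₀ g ≠ 0`.
The character facts `|χ g| ≤ χ 1` and `χ g⁻¹ = conj (χ g)` come from diagonalising `ρ g`,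
whose eigenvalues are roots of unity.
-/

theorem Finset.eq_zero_or_eq_of_sum_mul_eq_sum_mul {ι R : Type*} [CommRing R] [LinearOrder R]
    [IsStrictOrderedRing R] {s : Finset ι} {a b : ι → R} {M : R} (ha : ∀ i ∈ s, 0 ≤ a i)
    (hb : ∀ i ∈ s, b i ≤ M) (h : ∑ i ∈ s, a i * b i = (∑ i ∈ s, a i) * M) :
    ∀ i ∈ s, a i = 0 ∨ b i = M := by
  have hzero : ∑ i ∈ s, a i * (M - b i) = 0 := by
    simp only [mul_sub, Finset.sum_sub_distrib, ← Finset.sum_mul, h, sub_self]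
  intro i hi
  have := (Finset.sum_eq_zero_iff_of_nonneg fun j hj =>
    mul_nonneg (ha j hj) (sub_nonneg.mpr (hb j hj))).mp hzero i hi
  exact (mul_eq_zero.mp this).imp_right fun h => (sub_eq_zero.mp h).symm

namespace Module.End

theorem isSemisimple_of_pow_eq_one {K V : Type*} [Field K] [AddCommGroup V] [Module K V]
    {f : End K V} {m : ℕ} (hm : (m : K) ≠ 0) (hf : f ^ m = 1) : f.IsSemisimple :=
  isSemisimple_of_squarefree_aeval_eq_zero
    (Polynomial.X_pow_sub_one_separable_iff.mpr hm).squarefree (by simp [hf])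

theorem pow_apply_of_mem_eigenspace {R M : Type*} [CommRing R] [AddCommGroup M] [Module R M]
    {f : End R M} {μ : R} {x : M} (hx : x ∈ f.eigenspace μ) (k : ℕ) :
    (f ^ k) x = μ ^ k • x := by
  induction k with
  | zero => simp
  | succ k ih => rw [pow_succ', mul_apply, ih, map_smul, mem_eigenspace_iff.mp hx, smul_smul,
      pow_succ]

theorem IsSemisimple.trace_pow {K V : Type*} [Field K] [IsAlgClosed K] [AddCommGroup V]
    [Module K V] [FiniteDimensional K V] {f : End K V} (hf : f.IsSemisimple) (k : ℕ) :
    LinearMap.trace K V (f ^ k) =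
      ∑ μ ∈ f.finite_hasEigenvalue.toFinset, (finrank K (f.eigenspace μ) : K) * μ ^ k := by
  classical
  have hint : DirectSum.IsInternal f.eigenspace :=
    DirectSum.isInternal_submodule_of_iSupIndep_of_iSup_eq_top f.eigenspaces_iSupIndep
      hf.iSup_eigenspace_eq_top
  have hmaps (μ : K) : Set.MapsTo (f ^ k) (f.eigenspace μ) (f.eigenspace μ) := fun x hx => by
    rw [SetLike.mem_coe, pow_apply_of_mem_eigenspace hx]
    exact Submodule.smul_mem _ _ hx
  rw [LinearMap.trace_eq_sum_trace_restrict' hint f.finite_hasEigenvalue hmaps]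
  refine Finset.sum_congr rfl fun μ _ => ?_
  have : (f ^ k).restrict (hmaps μ) = μ ^ k • LinearMap.id :=
    LinearMap.ext fun x => Subtype.ext (pow_apply_of_mem_eigenspace x.2 k)
  rw [this, map_smul, LinearMap.trace_id, smul_eq_mul, mul_comm]

theorem HasEigenvalue.pow_eq_one {K V : Type*} [Field K] [AddCommGroup V] [Module K V]
    {f : End K V} {μ : K} {m : ℕ} (hμ : f.HasEigenvalue μ) (hf : f ^ m = 1) : μ ^ m = 1 := by
  obtain ⟨v, hv⟩ := hμ.exists_hasEigenvector
  have : μ ^ m • v = (1 : K) • v := by rw [← hv.pow_apply, hf, one_apply, one_smul]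
  exact smul_left_injective K hv.2 this

section Complex

variable {V : Type*} [AddCommGroup V] [Module ℂ V] [FiniteDimensional ℂ V] {f : End ℂ V} {m : ℕ}

theorem norm_trace_le_finrank_of_pow_eq_one (hm : m ≠ 0) (hf : f ^ m = 1) :
    ‖LinearMap.trace ℂ V f‖ ≤ finrank ℂ V := by
  have hss := isSemisimple_of_pow_eq_one (Nat.cast_ne_zero.mpr hm) hf
  have hdim := hss.trace_pow 0
  have htrace := hss.trace_pow 1
  simp only [pow_zero, pow_one, LinearMap.trace_one, mul_one] at hdim htrace
  calc ‖LinearMap.trace ℂ V f‖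
      = ‖∑ μ ∈ f.finite_hasEigenvalue.toFinset, (finrank ℂ (f.eigenspace μ) : ℂ) * μ‖ := by
        rw [htrace]
    _ ≤ ∑ μ ∈ f.finite_hasEigenvalue.toFinset, ‖(finrank ℂ (f.eigenspace μ) : ℂ) * μ‖ :=
        norm_sum_le _ _
    _ = ∑ μ ∈ f.finite_hasEigenvalue.toFinset, (finrank ℂ (f.eigenspace μ) : ℝ) := by
        refine Finset.sum_congr rfl fun μ hμ => ?_
        have hμm := ((Set.Finite.mem_toFinset _).mp hμ).pow_eq_one hf
        rw [norm_mul, Complex.norm_eq_one_of_pow_eq_one hμm hm, mul_one, Complex.norm_natCast]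
    _ = finrank ℂ V := by exact_mod_cast hdim.symm

theorem trace_pow_pred_of_pow_eq_one (hm : m ≠ 0) (hf : f ^ m = 1) :
    LinearMap.trace ℂ V (f ^ (m - 1)) = starRingEnd ℂ (LinearMap.trace ℂ V f) := by
  have hss := isSemisimple_of_pow_eq_one (Nat.cast_ne_zero.mpr hm) hf
  have htrace := hss.trace_pow 1
  simp only [pow_one] at htrace
  rw [hss.trace_pow, htrace, map_sum]
  refine Finset.sum_congr rfl fun μ hμ => ?_
  have hμm := ((Set.Finite.mem_toFinset _).mp hμ).pow_eq_one hf
  have hμinv : μ ^ (m - 1) = μ⁻¹ := eq_inv_of_mul_eq_one_left (by rw [pow_sub_one_mul hm, hμm])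
  rw [map_mul, Complex.conj_natCast, hμinv,
    Complex.inv_eq_conj (Complex.norm_eq_one_of_pow_eq_one hμm hm)]

end Complex

end Module.End

namespace FDRep

variable {G : Type} [Group G]

theorem norm_character_le [Finite G] (V : FDRep ℂ G) (g : G) :
    ‖V.character g‖ ≤ Module.finrank ℂ V :=
  Module.End.norm_trace_le_finrank_of_pow_eq_one (orderOf_pos g).ne'
    (by rw [← map_pow, pow_orderOf_eq_one, map_one])

theorem character_inv [Finite G] (V : FDRep ℂ G) (g : G) :
    V.character g⁻¹ = starRingEnd ℂ (V.character g) := by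
  have hinv : g⁻¹ = g ^ (orderOf g - 1) :=
    (eq_inv_of_mul_eq_one_left (by rw [pow_sub_one_mul (orderOf_pos g).ne',
      pow_orderOf_eq_one])).symm
  rw [hinv, FDRep.character, map_pow]
  exact Module.End.trace_pow_pred_of_pow_eq_one (orderOf_pos g).ne'
    (by rw [← map_pow, pow_orderOf_eq_one, map_one])

theorem sum_norm_sq_character [Fintype G] (V : FDRep ℂ G) [CategoryTheory.Simple V] :
    ∑ g, ‖V.character g‖ ^ 2 = Fintype.card G := by
  have hG : (Nat.card G : ℂ) ≠ 0 := Nat.cast_ne_zero.mpr Nat.card_pos.ne'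
  have : Invertible (Nat.card G : ℂ) := invertibleOfNonzero hG
  have h := FDRep.char_orthonormal V V
  rw [if_pos ⟨CategoryTheory.Iso.refl V⟩, inv_mul_eq_one₀ hG] at h
  simp_rw [character_inv, Complex.mul_conj', Nat.card_eq_fintype_card] at h
  exact_mod_cast h.symm

end FDRep

section

variable {G : Type} [Group G] {χ : G → ℂ}

theorem IsIrrChar.norm_apply_le [Finite G] (hχ : IsIrrChar G χ) (g : G) : ‖χ g‖ ≤ ‖χ 1‖ := by
  obtain ⟨V, -, rfl⟩ := hχ
  rw [FDRep.char_one, Complex.norm_natCast]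
  exact V.norm_character_le g

theorem IsIrrChar.sum_norm_sq [Fintype G] (hχ : IsIrrChar G χ) :
    ∑ g, ‖χ g‖ ^ 2 = Fintype.card G := by
  obtain ⟨V, hV, rfl⟩ := hχ
  exact V.sum_norm_sq_character

theorem norm_cInner_self [Fintype G] (f : G → ℂ) :
    ‖cInner G f f‖ = (Fintype.card G : ℝ)⁻¹ * ∑ g, ‖f g‖ ^ 2 := by
  have : cInner G f f = ((Fintype.card G : ℝ)⁻¹ * ∑ g, ‖f g‖ ^ 2 : ℝ) := by
    simp [cInner, Complex.mul_conj']
  rw [this, Complex.norm_real, Real.norm_of_nonneg (by positivity)]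

end

theorem stmt19_general {G : Type} [Group G] [Fintype G] (n : ℕ)
    (χ : Fin n → G → ℂ) (hirr : ∀ i, IsIrrChar G (χ i)) (i₀ : Fin n)
    (heq : ‖cInner G (∏ i, χ i) (∏ i, χ i)‖ =
      ∏ i ∈ Finset.univ.erase i₀, Complex.normSq (χ i 1)) :
    ∀ g : G, χ i₀ g = 0 ∨
      ‖∏ i ∈ Finset.univ.erase i₀, χ i g‖ =
        ∏ i ∈ Finset.univ.erase i₀, ‖χ i 1‖ := by
  set E := Finset.univ.erase i₀
  have hbound (g : G) : ‖∏ i ∈ E, χ i g‖ ≤ ∏ i ∈ E, ‖χ i 1‖ := by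
    rw [norm_prod]
    exact Finset.prod_le_prod (fun i _ => norm_nonneg _) fun i _ => (hirr i).norm_apply_le g
  have hsplit (g : G) : ‖(∏ i, χ i) g‖ ^ 2 = ‖χ i₀ g‖ ^ 2 * ‖∏ i ∈ E, χ i g‖ ^ 2 := by
    rw [Finset.prod_apply, ← Finset.mul_prod_erase _ _ (Finset.mem_univ i₀), norm_mul, mul_pow]
  have hsum : ∑ g, ‖χ i₀ g‖ ^ 2 * ‖∏ i ∈ E, χ i g‖ ^ 2 =
      (∑ g, ‖χ i₀ g‖ ^ 2) * (∏ i ∈ E, ‖χ i 1‖) ^ 2 := by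
    have hcard : (Fintype.card G : ℝ) ≠ 0 := Nat.cast_ne_zero.mpr Fintype.card_ne_zero
    rw [norm_cInner_self] at heq
    simp_rw [hsplit, Complex.normSq_eq_norm_sq, Finset.prod_pow] at heq
    rw [(hirr i₀).sum_norm_sq, ← heq, mul_inv_cancel_left₀ hcard]
  intro g
  rcases Finset.eq_zero_or_eq_of_sum_mul_eq_sum_mul (fun _ _ => sq_nonneg _)
    (fun x _ => pow_le_pow_left₀ (norm_nonneg _) (hbound x) 2) hsum g (Finset.mem_univ g)
    with h | h
  · exact .inl (by simpa using h)
  · exact .inr ((sq_eq_sq₀ (norm_nonneg _) (Finset.prod_nonneg fun i _ => norm_nonneg _)).mp h)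

theorem stmt19 {G : Type} [Group G] [Fintype G] (n : ℕ) (hn : 2 ≤ n)
    (χ : Fin n → G → ℂ) (hirr : ∀ i, IsIrrChar G (χ i)) (i₀ : Fin n)
    (hmax : ∀ i, ‖χ i 1‖ ≤ ‖χ i₀ 1‖)
    (heq : ‖cInner G (∏ i, χ i) (∏ i, χ i)‖ =
      ∏ i ∈ Finset.univ.erase i₀, Complex.normSq (χ i 1)) :
    ∀ g : G, χ i₀ g = 0 ∨
      ‖∏ i ∈ Finset.univ.erase i₀, χ i g‖ =
        ∏ i ∈ Finset.univ.erase i₀, ‖χ i 1‖ :=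
  stmt19_general n χ hirr i₀ heq
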